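/- arXiv:2007.03960 — 3 statements merged into one kernel-verified Lean document; each statement's English description precedes it below -/
import Mathlib

section
/- Let X be a finite set with |X| = n, f : X → ℝ, and let π₀ be the uniform distribution on X. Define π_g(x) ∝ exp(-g·f(x)). Then the Shannon entropy H(π_g) = -∑_x π_g(x) log π_g(x) is monotonically non-increasing in g ≥ 0. -/
open Real BigOperators Finset Filter

def IsPMF {X : Type*} [Fintype X] (p : X → ℝ) : Prop :=
  (∀ x, 0 ≤ p x) ∧ ∑ x, p x = 1

noncomputable def expVal {X : Type*} [Fintype X] (p f : X → ℝ) : ℝ := ∑ x, p x * f x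

noncomputable def varVal {X : Type*} [Fintype X] (p f : X → ℝ) : ℝ :=
  expVal p (fun x => f x ^ 2) - (expVal p f) ^ 2

noncomputable def covVal {X : Type*} [Fintype X] (p u v : X → ℝ) : ℝ :=
  expVal p (fun x => u x * v x) - expVal p u * expVal p v

noncomputable def klDiv' {X : Type*} [Fintype X] (p q : X → ℝ) : ℝ :=
  ∑ x, p x * Real.log (p x / q x)

noncomputable def entropyF {X : Type*} [Fintype X] (p : X → ℝ) : ℝ :=
  -∑ x, p x * Real.log (p x)

noncomputable def tilt {X : Type*} [Fintype X] (π₀ f : X → ℝ) (g : ℝ) (x : X) : ℝ :=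
  π₀ x * Real.exp (-g * f x) / ∑ y, π₀ y * Real.exp (-g * f y)

/-!
For the uniform prior, `H(π_g) = log n - KL(π_g ‖ π₀)`, and for any positive prior
`KL(π_g ‖ π₀) = -g μ(g) - log Z(g)`, where `Z` is the partition function and `μ(g)` the mean of `f`
under `π_g`. Gibbs' inequality `KL(π_{g₂} ‖ π_{g₁}) ≥ 0` reads `log Z(g₁) - log Z(g₂) ≥ (g₂ - g₁) μ(g₂)`.
Used in both directions it shows that `μ` is antitone, and it gives
`KL(π_{g₂} ‖ π₀) - KL(π_{g₁} ‖ π₀) ≥ g₁ (μ(g₁) - μ(g₂)) ≥ 0` for `0 ≤ g₁ ≤ g₂`.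
-/

section Tilt

variable {X : Type*} [Fintype X]

theorem klDiv'_nonneg {p q : X → ℝ} (hp : IsPMF p) (hq_pos : ∀ x, 0 < q x) (hq : ∑ x, q x = 1) :
    0 ≤ klDiv' p q := by
  have hterm : ∀ x, q x * InformationTheory.klFun (p x / q x)
      = p x * log (p x / q x) + q x - p x := by
    intro x
    have := (hq_pos x).ne'
    rw [InformationTheory.klFun_apply]
    field_simp
  have hsum := sum_nonneg fun x (_ : x ∈ univ) =>
    mul_nonneg (hq_pos x).le (InformationTheory.klFun_nonneg (div_nonneg (hp.1 x) (hq_pos x).le))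
  simp only [hterm, sum_sub_distrib, sum_add_distrib, hp.2, hq] at hsum
  simpa [klDiv'] using hsum

theorem expVal_mul_add {p : X → ℝ} (hp : ∑ x, p x = 1) (u : X → ℝ) (a b : ℝ) :
    expVal p (fun x => a * u x + b) = a * expVal p u + b := by
  simp only [expVal, mul_add, sum_add_distrib, ← sum_mul, hp, one_mul, mul_sum]
  congr 1
  exact sum_congr rfl fun x _ => mul_left_comm _ _ _

theorem entropyF_eq_log_card_sub_klDiv' [Nonempty X] {p : X → ℝ} (hp : ∑ x, p x = 1) :
    entropyF p = log (Fintype.card X) - klDiv' p (fun _ => ((Fintype.card X : ℝ))⁻¹) := by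
  have hcard : (Fintype.card X : ℝ) ≠ 0 := Nat.cast_ne_zero.2 Fintype.card_ne_zero
  have hterm : ∀ x, p x * log (p x / (Fintype.card X : ℝ)⁻¹)
      = p x * log (p x) + p x * log (Fintype.card X) := by
    intro x
    rcases eq_or_ne (p x) 0 with h | h
    · simp [h]
    · rw [div_inv_eq_mul, log_mul h hcard, mul_add]
  simp only [entropyF, klDiv', hterm, sum_add_distrib, ← sum_mul, hp, one_mul]
  ring

noncomputable def partitionFn (π₀ f : X → ℝ) (g : ℝ) : ℝ := ∑ y, π₀ y * exp (-g * f y)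

variable {π₀ : X → ℝ}

theorem tilt_eq (f : X → ℝ) (g : ℝ) (x : X) :
    tilt π₀ f g x = π₀ x * exp (-g * f x) / partitionFn π₀ f g := rfl

theorem partitionFn_pos [Nonempty X] (hπ₀ : ∀ x, 0 < π₀ x) (f : X → ℝ) (g : ℝ) :
    0 < partitionFn π₀ f g :=
  sum_pos (fun x _ => mul_pos (hπ₀ x) (exp_pos _)) univ_nonempty

theorem tilt_pos [Nonempty X] (hπ₀ : ∀ x, 0 < π₀ x) (f : X → ℝ) (g : ℝ) (x : X) :
    0 < tilt π₀ f g x :=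
  div_pos (mul_pos (hπ₀ x) (exp_pos _)) (partitionFn_pos hπ₀ f g)

theorem isPMF_tilt [Nonempty X] (hπ₀ : ∀ x, 0 < π₀ x) (f : X → ℝ) (g : ℝ) :
    IsPMF (tilt π₀ f g) := by
  refine ⟨fun x => (tilt_pos hπ₀ f g x).le, ?_⟩
  simp only [tilt_eq, ← sum_div]
  exact div_self (partitionFn_pos hπ₀ f g).ne'

theorem log_tilt [Nonempty X] (hπ₀ : ∀ x, 0 < π₀ x) (f : X → ℝ) (g : ℝ) (x : X) :
    log (tilt π₀ f g x) = log (π₀ x) - g * f x - log (partitionFn π₀ f g) := by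
  rw [tilt_eq, log_div (mul_pos (hπ₀ x) (exp_pos _)).ne' (partitionFn_pos hπ₀ f g).ne',
    log_mul (hπ₀ x).ne' (exp_pos _).ne', log_exp]
  ring

theorem klDiv'_tilt_tilt [Nonempty X] (hπ₀ : ∀ x, 0 < π₀ x) (f : X → ℝ) (g₁ g₂ : ℝ) :
    klDiv' (tilt π₀ f g₂) (tilt π₀ f g₁)
      = (g₁ - g₂) * expVal (tilt π₀ f g₂) f
        + (log (partitionFn π₀ f g₁) - log (partitionFn π₀ f g₂)) := by
  have hlog : ∀ x, log (tilt π₀ f g₂ x / tilt π₀ f g₁ x)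
      = (g₁ - g₂) * f x + (log (partitionFn π₀ f g₁) - log (partitionFn π₀ f g₂)) := by
    intro x
    rw [log_div (tilt_pos hπ₀ f g₂ x).ne' (tilt_pos hπ₀ f g₁ x).ne', log_tilt hπ₀, log_tilt hπ₀]
    ring
  simp only [klDiv', hlog]
  exact expVal_mul_add (isPMF_tilt hπ₀ f g₂).2 f _ _

theorem klDiv'_tilt_prior [Nonempty X] (hπ₀ : ∀ x, 0 < π₀ x) (f : X → ℝ) (g : ℝ) :
    klDiv' (tilt π₀ f g) π₀ = -g * expVal (tilt π₀ f g) f + -log (partitionFn π₀ f g) := by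
  have hlog : ∀ x, log (tilt π₀ f g x / π₀ x) = -g * f x + -log (partitionFn π₀ f g) := by
    intro x
    rw [log_div (tilt_pos hπ₀ f g x).ne' (hπ₀ x).ne', log_tilt hπ₀]
    ring
  simp only [klDiv', hlog]
  exact expVal_mul_add (isPMF_tilt hπ₀ f g).2 f _ _

theorem sub_mul_expVal_tilt_le_log_partitionFn_sub [Nonempty X] (hπ₀ : ∀ x, 0 < π₀ x)
    (f : X → ℝ) (g₁ g₂ : ℝ) :
    (g₂ - g₁) * expVal (tilt π₀ f g₂) f
      ≤ log (partitionFn π₀ f g₁) - log (partitionFn π₀ f g₂) := by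
  have hkl := klDiv'_nonneg (isPMF_tilt hπ₀ f g₂) (tilt_pos hπ₀ f g₁)
    (isPMF_tilt hπ₀ f g₁).2
  rw [klDiv'_tilt_tilt hπ₀] at hkl
  linarith

theorem expVal_tilt_antitone [Nonempty X] (hπ₀ : ∀ x, 0 < π₀ x) (f : X → ℝ) :
    Antitone fun g => expVal (tilt π₀ f g) f := by
  intro g₁ g₂ hg
  rcases hg.eq_or_lt with rfl | hlt
  · exact le_rfl
  have h₁₂ := sub_mul_expVal_tilt_le_log_partitionFn_sub hπ₀ f g₁ g₂
  have h₂₁ := sub_mul_expVal_tilt_le_log_partitionFn_sub hπ₀ f g₂ g₁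
  exact le_of_mul_le_mul_left (by linarith) (sub_pos.2 hlt)

theorem klDiv'_tilt_prior_monotoneOn [Nonempty X] (hπ₀ : ∀ x, 0 < π₀ x) (f : X → ℝ) :
    MonotoneOn (fun g => klDiv' (tilt π₀ f g) π₀) (Set.Ici 0) := by
  intro g₁ hg₁ g₂ _ hg
  simp only [klDiv'_tilt_prior hπ₀]
  have hgibbs := sub_mul_expVal_tilt_le_log_partitionFn_sub hπ₀ f g₁ g₂
  have hmean := mul_le_mul_of_nonneg_left (expVal_tilt_antitone hπ₀ f hg) (Set.mem_Ici.1 hg₁)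
  linarith

end Tilt

/-- for uniform prior, the entropy of the tilted distribution is
non-increasing in g ≥ 0. -/
theorem tilt_entropy_antitone_of_uniform {X : Type*} [Fintype X] [Nonempty X]
    (f : X → ℝ) :
    ∀ g₁ g₂ : ℝ, 0 ≤ g₁ → g₁ ≤ g₂ →
      entropyF (tilt (fun _ : X => ((Fintype.card X : ℝ))⁻¹) f g₂) ≤
      entropyF (tilt (fun _ : X => ((Fintype.card X : ℝ))⁻¹) f g₁) := by
  intro g₁ g₂ hg₁ hg
  have hπ₀ : ∀ _ : X, (0 : ℝ) < (Fintype.card X : ℝ)⁻¹ :=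
    fun _ => inv_pos.2 (Nat.cast_pos.2 Fintype.card_pos)
  rw [entropyF_eq_log_card_sub_klDiv' (isPMF_tilt hπ₀ f g₂).2,
    entropyF_eq_log_card_sub_klDiv' (isPMF_tilt hπ₀ f g₁).2]
  exact sub_le_sub_left (klDiv'_tilt_prior_monotoneOn hπ₀ f hg₁ (hg₁.trans hg) hg) _
end

section
/- Let X be a finite nonempty set, f : X → ℝ, and π₀ a pmf with full support. Define π_g(x) ∝ π₀(x)·exp(-g·f(x)). Then d/dg H(π_g) = -g·Var_{π_g}(f) + Cov_{π_g}(log π₀, f), where H denotes Shannon entropy and Cov_π(u,v) = E_π[uv] - E_π[u]E_π[v]. -/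
/-!
With `Z s = ∑ x, π₀ x e^{-s f x}` one has `log π_s = log π₀ - s f - log Z s`, hence
`H(π_s) = -E_s[log π₀] + s E_s[f] + log Z s`. A tilted expectation `E_s[u]` is a quotient of two
weighted partition sums, which gives `d/ds E_s[u] = -Cov_s(u, f)`, and `(log Z)' = -E_s[f]`;
the two `E_s[f]` terms of the product rule cancel.
-/

open Real BigOperators Finset Filter

section Tilt

variable {X : Type*} [Fintype X]

noncomputable def tiltPartition (w f : X → ℝ) (s : ℝ) : ℝ :=
  ∑ x, w x * Real.exp (-s * f x)

theorem hasDerivAt_tiltPartition (w f : X → ℝ) (s : ℝ) :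
    HasDerivAt (tiltPartition w f) (-tiltPartition (fun x => w x * f x) f s) s := by
  unfold tiltPartition
  rw [← Finset.sum_neg_distrib]
  refine HasDerivAt.fun_sum fun x _ => ?_
  have hexp := (((hasDerivAt_id' s).fun_neg.mul_const (f x)).exp).const_mul (w x)
  refine hexp.congr_deriv ?_
  ring

theorem tiltPartition_pos [Nonempty X] {w : X → ℝ} (hw : ∀ x, 0 < w x) (f : X → ℝ) (s : ℝ) :
    0 < tiltPartition w f s :=
  Finset.sum_pos (fun x _ => mul_pos (hw x) (Real.exp_pos _)) Finset.univ_nonempty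

theorem tilt_apply (π₀ f : X → ℝ) (s : ℝ) (x : X) :
    tilt π₀ f s x = π₀ x * Real.exp (-s * f x) / tiltPartition π₀ f s :=
  rfl

theorem expVal_tilt (π₀ f u : X → ℝ) (s : ℝ) :
    expVal (tilt π₀ f s) u =
      tiltPartition (fun x => π₀ x * u x) f s / tiltPartition π₀ f s := by
  unfold expVal tilt tiltPartition
  rw [Finset.sum_div]
  refine Finset.sum_congr rfl fun x _ => ?_
  ring

theorem sum_tilt {π₀ : X → ℝ} (f : X → ℝ) {s : ℝ} (hZ : tiltPartition π₀ f s ≠ 0) :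
    ∑ x, tilt π₀ f s x = 1 := by
  have h := expVal_tilt π₀ f (fun _ => 1) s
  simp only [expVal, mul_one] at h
  rw [h, div_self hZ]

theorem hasDerivAt_expVal_tilt {π₀ : X → ℝ} (f u : X → ℝ) {g : ℝ}
    (hZ : tiltPartition π₀ f g ≠ 0) :
    HasDerivAt (fun s => expVal (tilt π₀ f s) u) (-covVal (tilt π₀ f g) u f) g := by
  rw [funext fun s => expVal_tilt π₀ f u s]
  have hquot := (hasDerivAt_tiltPartition (fun x => π₀ x * u x) f g).div
    (hasDerivAt_tiltPartition π₀ f g) hZ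
  refine hquot.congr_deriv ?_
  simp only [covVal, expVal_tilt, ← mul_assoc]
  field_simp
  ring

theorem covVal_self (p f : X → ℝ) : covVal p f f = varVal p f := by
  simp only [covVal, varVal, sq]

theorem log_tilt_s4 {π₀ : X → ℝ} (hpos : ∀ x, 0 < π₀ x) (f : X → ℝ) (s : ℝ) (x : X) :
    Real.log (tilt π₀ f s x) = Real.log (π₀ x) - s * f x - Real.log (tiltPartition π₀ f s) := by
  have : Nonempty X := ⟨x⟩
  rw [tilt_apply, Real.log_div (mul_pos (hpos x) (Real.exp_pos _)).ne'
    (tiltPartition_pos hpos f s).ne', Real.log_mul (hpos x).ne' (Real.exp_ne_zero _),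
    Real.log_exp]
  ring

theorem entropyF_tilt [Nonempty X] {π₀ : X → ℝ} (hpos : ∀ x, 0 < π₀ x) (f : X → ℝ) (s : ℝ) :
    entropyF (tilt π₀ f s) =
      -expVal (tilt π₀ f s) (fun x => Real.log (π₀ x)) + s * expVal (tilt π₀ f s) f
        + Real.log (tiltPartition π₀ f s) := by
  have hsum := sum_tilt f (tiltPartition_pos hpos f s).ne'
  simp only [entropyF, expVal, log_tilt_s4 hpos, mul_sub, Finset.sum_sub_distrib, ← Finset.sum_mul,
    hsum, Finset.mul_sum, mul_left_comm s]
  ring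

end Tilt

theorem tilt_entropy_hasDerivAt_general {X : Type*} [Fintype X] [Nonempty X]
    (π₀ f : X → ℝ) (hpos : ∀ x, 0 < π₀ x) (g : ℝ) :
    HasDerivAt (fun s : ℝ => entropyF (tilt π₀ f s))
      (-g * varVal (tilt π₀ f g) f +
        covVal (tilt π₀ f g) (fun x => Real.log (π₀ x)) f) g := by
  have hZ : tiltPartition π₀ f g ≠ 0 := (tiltPartition_pos hpos f g).ne'
  simp only [entropyF_tilt hpos f]
  have hderiv := (((hasDerivAt_expVal_tilt f (fun x => Real.log (π₀ x)) hZ).fun_neg.fun_add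
    ((hasDerivAt_id' g).fun_mul (hasDerivAt_expVal_tilt f f hZ))).fun_add
    ((hasDerivAt_tiltPartition π₀ f g).log hZ))
  refine hderiv.congr_deriv ?_
  rw [covVal_self, expVal_tilt]
  ring

/-- d/dg H(π_g) = -g·Var_{π_g}(f) + Cov_{π_g}(log π₀, f). -/
theorem tilt_entropy_hasDerivAt {X : Type*} [Fintype X] [Nonempty X]
    (π₀ f : X → ℝ) (h0 : IsPMF π₀) (hpos : ∀ x, 0 < π₀ x) (g : ℝ) :
    HasDerivAt (fun s : ℝ => entropyF (tilt π₀ f s))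
      (-g * varVal (tilt π₀ f g) f +
        covVal (tilt π₀ f g) (fun x => Real.log (π₀ x)) f) g :=
  tilt_entropy_hasDerivAt_general π₀ f hpos g
end

section
/- Let X be a finite nonempty set, f : X → ℝ, π₀ a pmf with full support, λ > 0, γ > 0, and define the sequence π_{g+1}(x) ∝ π_g(x)^{λ/(λ+γ)}·exp(-f(x)/(λ+γ)). Then for all g ≥ 0, π_g(x) ∝ π₀(x)^{α_g}·exp(-(1-α_g)·f(x)/γ) where α_g = (λ/(λ+γ))^g. -/
open Real BigOperators Finset Filter

/-- closed form of the entropy-regularized distribution sequence. -/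
theorem erpic_sequence_closed_form {X : Type*} [Fintype X] [Nonempty X]
    (f π₀ : X → ℝ) (h0 : IsPMF π₀) (hpos : ∀ x, 0 < π₀ x)
    (lam γ : ℝ) (hlam : 0 < lam) (hγ : 0 < γ)
    (p : ℕ → X → ℝ) (hinit : p 0 = π₀)
    (hrec : ∀ g : ℕ, ∃ c : ℝ, 0 < c ∧ ∀ x,
      p (g + 1) x = c * p g x ^ (lam / (lam + γ)) * Real.exp (-f x / (lam + γ))) :
    ∀ g : ℕ, ∃ d : ℝ, 0 < d ∧ ∀ x,
      p g x = d * π₀ x ^ ((lam / (lam + γ)) ^ g) *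
        Real.exp (-((1 - (lam / (lam + γ)) ^ g) * f x / γ)) := by
  intro g
  induction g with
  | zero =>
    refine ⟨1, one_pos, fun x => ?_⟩
    simp [hinit, Real.rpow_one]
  | succ g ih =>
    obtain ⟨d, hd, hpd⟩ := ih
    obtain ⟨c, hc, hpc⟩ := hrec g
    set r : ℝ := lam / (lam + γ) with hr
    have hsum : 0 < lam + γ := by linarith
    have hr0 : 0 < r := div_pos hlam hsum
    refine ⟨c * d ^ r, mul_pos hc (Real.rpow_pos_of_pos hd r), fun x => ?_⟩
    have hπ := hpos x
    rw [hpc x, hpd x]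
    rw [Real.mul_rpow (by positivity) (Real.exp_nonneg _),
        Real.mul_rpow (le_of_lt hd) (by positivity),
        ← Real.rpow_natCast r g, ← Real.rpow_natCast r (g+1),
        ← Real.rpow_mul (le_of_lt hπ), ← Real.exp_mul]
    have hexp : -((1 - r ^ (g:ℝ)) * f x / γ) * r + -f x / (lam + γ)
        = -((1 - r ^ ((g:ℝ)+1)) * f x / γ) := by
      have hrs : r ^ ((g:ℝ)+1) = r ^ (g:ℝ) * r := by
        rw [Real.rpow_add hr0, Real.rpow_one]
      rw [hrs, hr]
      field_simp
      ring
    have hrg : r ^ (g:ℝ) * r = r ^ ((g:ℝ)+1) := by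
      rw [Real.rpow_add hr0, Real.rpow_one]
    push_cast
    rw [hrg, ← hexp, Real.exp_add]
    ring
end
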